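/- arXiv:2201.04307 — 9 statements merged into one kernel-verified Lean document; each statement's English description precedes it below -/
import Mathlib

section
/- Let q be an odd prime power, a ∈ F_{q²}^× an element of multiplicative order q−1, and Y = [[0,0,a],[0,−1,0],[a⁻¹,0,0]], Z = [[0,0,1],[0,−1,0],[1,0,0]] over F_{q²}. Then YZ = diag(a, 1, a⁻¹), and the image of YZ in PSU₃(q) has order q−1. -/
open Matrix

/-- The antidiagonal Hermitian form matrix `W`. -/
def Wmat (F : Type) [Field F] : Matrix (Fin 3) (Fin 3) F :=
  !![0, 0, 1; 0, 1, 0; 1, 0, 0]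

/-- The special unitary group `SU₃(q)` as a subgroup of `SL₃(F_{q²})`:
matrices `A` with `(A.map σ)ᵀ * W * A = W`, where `σ : x ↦ x^q`. -/
def SU3 (F : Type) [Field F] (σ : F →+* F) :
    Subgroup (Matrix.SpecialLinearGroup (Fin 3) F) where
  carrier := {A | ((A : Matrix (Fin 3) (Fin 3) F).map σ)ᵀ * Wmat F *
      (A : Matrix (Fin 3) (Fin 3) F) = Wmat F}
  one_mem' := by simp
  mul_mem' := by
    intro A B hA hB
    simp only [Set.mem_setOf_eq] at *
    calc ((↑(A * B) : Matrix (Fin 3) (Fin 3) F).map σ)ᵀ * Wmat F * ↑(A * B)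
        = ((B : Matrix (Fin 3) (Fin 3) F).map σ)ᵀ *
            (((A : Matrix (Fin 3) (Fin 3) F).map σ)ᵀ * Wmat F * A) * B := by
          simp only [Matrix.SpecialLinearGroup.coe_mul, Matrix.map_mul,
            Matrix.transpose_mul, Matrix.mul_assoc]
      _ = Wmat F := by rw [hA, hB]
  inv_mem' := by
    intro A hA
    simp only [Set.mem_setOf_eq] at *
    have h1 : (A : Matrix (Fin 3) (Fin 3) F) * (↑(A⁻¹) : Matrix (Fin 3) (Fin 3) F) = 1 := by
      rw [← Matrix.SpecialLinearGroup.coe_mul, mul_inv_cancel A,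
        Matrix.SpecialLinearGroup.coe_one]
    show ((↑(A⁻¹) : Matrix (Fin 3) (Fin 3) F).map σ)ᵀ * Wmat F *
        (↑(A⁻¹) : Matrix (Fin 3) (Fin 3) F) = Wmat F
    calc ((↑(A⁻¹) : Matrix (Fin 3) (Fin 3) F).map σ)ᵀ * Wmat F *
          (↑(A⁻¹) : Matrix (Fin 3) (Fin 3) F)
        = ((↑(A⁻¹) : Matrix (Fin 3) (Fin 3) F).map σ)ᵀ *
            (((A : Matrix (Fin 3) (Fin 3) F).map σ)ᵀ * Wmat F *
              (A : Matrix (Fin 3) (Fin 3) F)) *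
            (↑(A⁻¹) : Matrix (Fin 3) (Fin 3) F) := by rw [hA]
      _ = (((A : Matrix (Fin 3) (Fin 3) F) *
              (↑(A⁻¹) : Matrix (Fin 3) (Fin 3) F)).map σ)ᵀ * Wmat F *
            ((A : Matrix (Fin 3) (Fin 3) F) * (↑(A⁻¹) : Matrix (Fin 3) (Fin 3) F)) := by
          simp only [Matrix.map_mul, Matrix.transpose_mul, Matrix.mul_assoc]
      _ = Wmat F := by rw [h1]; simp

/-! The matrix `YZ = diag(a, 1, a⁻¹)` is unitary because `a ∈ 𝔽_q`, and its powers are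
`diag(aⁿ, 1, a⁻ⁿ)`. Such a power is central in `SU₃(q)` only if it commutes with the unipotent
unitary matrix `!![1, 1, γ; 0, 1, -1; 0, 0, 1]`, where `γ + γ^q = -1`; comparing the `(0, 1)`
entries gives `aⁿ = 1`. Hence the image of `YZ` in `PSU₃(q)` has the same order as `a`. In odd
characteristic `γ = -1/2` works, and the characteristic is odd because `a` has even order `q - 1`. -/

theorem two_ne_zero_of_even_orderOf {R : Type*} [CommRing R] [IsDomain R] (a : Rˣ)
    (heven : Even (orderOf a)) (hpos : 0 < orderOf a) : (2 : R) ≠ 0 := by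
  obtain ⟨k, hk⟩ := heven
  have hsq : (a ^ k : R) ^ 2 = 1 := by
    rw [← pow_mul, mul_two, ← hk, ← Units.val_pow_eq_pow_val, pow_orderOf_eq_one, Units.val_one]
  have hne : (a ^ k : R) ≠ 1 := by
    rw [← Units.val_pow_eq_pow_val, Ne, Units.val_eq_one]
    exact pow_ne_one_of_lt_orderOf (by omega) (by omega)
  have hneg : (a ^ k : R) = -1 := (sq_eq_one_iff.mp hsq).resolve_left hne
  intro h2
  apply hne
  rw [hneg, neg_eq_iff_add_eq_zero, one_add_one_eq_two, h2]

section SU3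

variable {F : Type} [Field F] {σ : F →+* F}

lemma antidiag_mul_antidiag (x : F) :
    (!![0, 0, x; 0, -1, 0; x⁻¹, 0, 0] : Matrix (Fin 3) (Fin 3) F) *
        !![0, 0, 1; 0, -1, 0; 1, 0, 0] = diagonal ![x, 1, x⁻¹] := by
  ext i j; fin_cases i <;> fin_cases j <;> simp [Matrix.mul_apply, Fin.sum_univ_three]

lemma mem_SU3_of_coe_eq_diagonal {A : SpecialLinearGroup (Fin 3) F} {x : F}
    (hA : (A : Matrix (Fin 3) (Fin 3) F) = diagonal ![x, 1, x⁻¹]) (hx : x ≠ 0) (hσx : σ x = x) :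
    A ∈ SU3 F σ := by
  change ((A : Matrix (Fin 3) (Fin 3) F).map σ)ᵀ * Wmat F * (A : Matrix (Fin 3) (Fin 3) F) = Wmat F
  rw [hA]
  ext i j; fin_cases i <;> fin_cases j <;>
    simp [Wmat, Matrix.mul_apply, Fin.sum_univ_three, hσx, hx]

/-- Unitarity of this matrix is the condition `σ γ + γ = -1` on its corner entry. -/
def unipotentSU3 (γ : F) (hγ : σ γ + γ = -1) : SU3 F σ :=
  ⟨⟨!![1, 1, γ; 0, 1, -1; 0, 0, 1], by simp [det_fin_three]⟩, by
    change (Matrix.map _ σ)ᵀ * Wmat F * _ = Wmat F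
    ext i j; fin_cases i <;> fin_cases j <;>
      (simp [Wmat, Matrix.mul_apply, Fin.sum_univ_three]; try linear_combination hγ)⟩

lemma pow_mem_center_iff {g : SU3 F σ} {a : Fˣ}
    (hg : ((g : SpecialLinearGroup (Fin 3) F) : Matrix (Fin 3) (Fin 3) F) =
      diagonal ![(a : F), 1, (a : F)⁻¹])
    {γ : F} (hγ : σ γ + γ = -1) (n : ℕ) :
    g ^ n ∈ Subgroup.center (SU3 F σ) ↔ a ^ n = 1 := by
  have hgn : ((g ^ n : SU3 F σ) : Matrix (Fin 3) (Fin 3) F) =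
      diagonal ![(a : F) ^ n, 1, ((a : F) ^ n)⁻¹] := by
    change ((g : SpecialLinearGroup (Fin 3) F) : Matrix (Fin 3) (Fin 3) F) ^ n = _
    rw [hg, diagonal_pow]
    congr 1
    ext i; fin_cases i <;> simp
  constructor
  · intro hc
    have hcomm : ((unipotentSU3 γ hγ * g ^ n : SU3 F σ) : Matrix (Fin 3) (Fin 3) F) 0 1 =
        ((g ^ n * unipotentSU3 γ hγ : SU3 F σ) : Matrix (Fin 3) (Fin 3) F) 0 1 := by
      rw [Subgroup.mem_center_iff.mp hc]
    change (!![1, 1, γ; 0, 1, -1; 0, 0, 1] * ((g ^ n : SU3 F σ) : Matrix (Fin 3) (Fin 3) F)) 0 1 =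
      (((g ^ n : SU3 F σ) : Matrix (Fin 3) (Fin 3) F) * !![1, 1, γ; 0, 1, -1; 0, 0, 1]) 0 1 at hcomm
    rw [hgn] at hcomm
    simp [Matrix.mul_apply, Fin.sum_univ_three] at hcomm
    exact Units.ext (by simpa using hcomm.symm)
  · intro han
    have hgn1 : g ^ n = 1 := by
      apply Subtype.ext; apply Subtype.ext
      rw [hgn, ← Units.val_pow_eq_pow_val, han]
      ext i j; fin_cases i <;> fin_cases j <;> simp
    rw [hgn1]
    exact Subgroup.one_mem _

lemma orderOf_mk_center_eq_orderOf {g : SU3 F σ} {a : Fˣ}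
    (hg : ((g : SpecialLinearGroup (Fin 3) F) : Matrix (Fin 3) (Fin 3) F) =
      diagonal ![(a : F), 1, (a : F)⁻¹])
    {γ : F} (hγ : σ γ + γ = -1) :
    orderOf (QuotientGroup.mk g : SU3 F σ ⧸ Subgroup.center (SU3 F σ)) = orderOf a :=
  orderOf_eq_orderOf_iff.mpr fun n => by
    rw [← QuotientGroup.mk_pow, QuotientGroup.eq_one_iff, pow_mem_center_iff hg hγ]

end SU3

theorem stmt_2_general (p f q : ℕ) (hpodd : Odd p) (hq : q = p ^ f)
    (F : Type) [Field F] [Fintype F]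
    (σ : F →+* F) (hσ : ∀ x : F, σ x = x ^ q)
    (a : Fˣ) (ha : orderOf a = q - 1) :
    (!![0, 0, (a : F); 0, -1, 0; (a : F)⁻¹, 0, 0] : Matrix (Fin 3) (Fin 3) F) *
        !![0, 0, 1; 0, -1, 0; 1, 0, 0] =
      Matrix.diagonal ![(a : F), 1, (a : F)⁻¹] ∧
    ∃ (h1 : ((!![0, 0, (a : F); 0, -1, 0; (a : F)⁻¹, 0, 0] : Matrix (Fin 3) (Fin 3) F) *
          !![0, 0, 1; 0, -1, 0; 1, 0, 0]).det = 1)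
      (h2 : (⟨_, h1⟩ : Matrix.SpecialLinearGroup (Fin 3) F) ∈ SU3 F σ),
      orderOf (QuotientGroup.mk (⟨⟨_, h1⟩, h2⟩ : SU3 F σ) :
          SU3 F σ ⧸ Subgroup.center (SU3 F σ)) = q - 1 := by
  have hpos : 0 < q - 1 := ha ▸ orderOf_pos a
  have hσa : σ a = a := by
    have hpow : a ^ q = a := by
      rw [← Nat.sub_add_cancel (by omega : 1 ≤ q), pow_succ, ← ha, pow_orderOf_eq_one, one_mul]
    rw [hσ, ← Units.val_pow_eq_pow_val, hpow]
  have heven : Even (q - 1) := Nat.Odd.sub_odd (hq ▸ hpodd.pow) odd_one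
  have htwo : (2 : F) ≠ 0 := two_ne_zero_of_even_orderOf a (ha ▸ heven) (orderOf_pos a)
  have hγ : σ (-2⁻¹) + -2⁻¹ = (-1 : F) := by
    rw [map_neg, map_inv₀, map_ofNat]
    field_simp
    norm_num
  refine ⟨antidiag_mul_antidiag _, by rw [antidiag_mul_antidiag]; simp [Fin.prod_univ_three],
    mem_SU3_of_coe_eq_diagonal (antidiag_mul_antidiag _) a.ne_zero hσa, ?_⟩
  rw [orderOf_mk_center_eq_orderOf (antidiag_mul_antidiag _) hγ, ha]

/-- Lemma 2.3: `YZ = diag(a, 1, a⁻¹)` and the image of `YZ` in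
`PSU₃(q) = SU₃(q)/Z(SU₃(q))` has order `q - 1`. -/
theorem stmt_2 (p f q : ℕ) (hp : Nat.Prime p) (hpodd : Odd p) (hq : q = p ^ f)
    (F : Type) [Field F] [Fintype F] (hF : Fintype.card F = q ^ 2)
    (σ : F →+* F) (hσ : ∀ x : F, σ x = x ^ q)
    (a : Fˣ) (ha : orderOf a = q - 1) :
    (!![0, 0, (a : F); 0, -1, 0; (a : F)⁻¹, 0, 0] : Matrix (Fin 3) (Fin 3) F) *
        !![0, 0, 1; 0, -1, 0; 1, 0, 0] =
      Matrix.diagonal ![(a : F), 1, (a : F)⁻¹] ∧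
    ∃ (h1 : ((!![0, 0, (a : F); 0, -1, 0; (a : F)⁻¹, 0, 0] : Matrix (Fin 3) (Fin 3) F) *
          !![0, 0, 1; 0, -1, 0; 1, 0, 0]).det = 1)
      (h2 : (⟨_, h1⟩ : Matrix.SpecialLinearGroup (Fin 3) F) ∈ SU3 F σ),
      orderOf (QuotientGroup.mk (⟨⟨_, h1⟩, h2⟩ : SU3 F σ) :
          SU3 F σ ⧸ Subgroup.center (SU3 F σ)) = q - 1 :=
  stmt_2_general p f q hpodd hq F σ hσ a ha
end

section
/- Let q₀ ≥ 2 be a prime power and r ≥ 11 an odd prime, and set q = q₀^r. Then 2(q−1) > q₀³(q₀³+1)(q₀²−1) · gcd((q₀^r+1)/(q₀+1), 3). -/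
/-- For a prime power `q₀ ≥ 2` and an odd prime `r ≥ 11`, with `q = q₀^r`,
`2(q-1)` exceeds the order of `SU₃(q₀).C_{gcd((q+1)/(q₀+1),3)}`. -/
theorem stmt_5 (q₀ r : ℕ) (h2 : 2 ≤ q₀) (hpp : ∃ p n, Nat.Prime p ∧ q₀ = p ^ n)
    (hr : Nat.Prime r) (hrodd : Odd r) (hr11 : 11 ≤ r) :
    2 * (q₀ ^ r - 1) >
      q₀ ^ 3 * (q₀ ^ 3 + 1) * (q₀ ^ 2 - 1) * Nat.gcd ((q₀ ^ r + 1) / (q₀ + 1)) 3 := by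
  have hg : Nat.gcd ((q₀ ^ r + 1) / (q₀ + 1)) 3 ≤ 3 :=
    Nat.le_of_dvd (by norm_num) (Nat.gcd_dvd_right _ _)
  have h1 : q₀ ^ 3 + 1 ≤ 2 * q₀ ^ 3 := by nlinarith [Nat.one_le_two_pow (n := 3), pow_le_pow_left₀ (by norm_num) h2 3]
  have hrhs : q₀ ^ 3 * (q₀ ^ 3 + 1) * (q₀ ^ 2 - 1) * Nat.gcd ((q₀ ^ r + 1) / (q₀ + 1)) 3
      ≤ q₀ ^ 3 * (2 * q₀ ^ 3) * q₀ ^ 2 * 3 := by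
    apply Nat.mul_le_mul
    apply Nat.mul_le_mul
    apply Nat.mul_le_mul_left _ h1
    · exact Nat.sub_le _ _
    · exact hg
  have h6 : q₀ ^ 3 * (2 * q₀ ^ 3) * q₀ ^ 2 * 3 = 6 * q₀ ^ 8 := by ring
  have h8 : 6 * q₀ ^ 8 < q₀ ^ 11 := by
    have : 8 ≤ q₀ ^ 3 := le_trans (by norm_num) (Nat.pow_le_pow_left h2 3)
    calc 6 * q₀ ^ 8 < 8 * q₀ ^ 8 := by nlinarith [pow_pos (show 0 < q₀ by omega) 8]
      _ ≤ q₀ ^ 3 * q₀ ^ 8 := Nat.mul_le_mul_right _ this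
      _ = q₀ ^ 11 := by ring
  have hq : q₀ ^ 11 ≤ q₀ ^ r := Nat.pow_le_pow_right (by omega) hr11
  have hbig : 2 ≤ q₀ ^ 11 := le_trans (by norm_num) (Nat.pow_le_pow_left h2 11)
  omega
end

section
/- Let q be an odd prime power with q ≥ 5, b ∈ F_{q²}^× with b + b^q = 1 and b ≠ b^q, and a ∈ F_{q²}^× with a² ≠ 1. Define X = [[−b^q, b, b^{q+1}],[1,0,b^q],[1,1,−b]], Y = [[0,0,a],[0,−1,0],[a⁻¹,0,0]], Z = [[0,0,1],[0,−1,0],[1,0,0]] over F_{q²}. Then the group generated by X, Y, Z acts irreducibly on F_{q²}³: it stabilizes no nonzero proper subspace of F_{q²}³. -/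
open Matrix

/-- Lemma 2.4: the group generated by `X`, `Y`, `Z` of Construction 2.2
acts irreducibly on row vectors of `F_{q²}³`. -/
theorem stmt_6 (p f q : ℕ) (hp : Nat.Prime p) (hpodd : Odd p) (hq : q = p ^ f)
    (hq5 : 5 ≤ q) (F : Type) [Field F] [Fintype F] (hF : Fintype.card F = q ^ 2)
    (b : F) (hb0 : b ≠ 0) (hb1 : b + b ^ q = 1) (hb2 : b ≠ b ^ q)
    (a : Fˣ) (ha : (a : F) ^ 2 ≠ 1)
    (W : Submodule F (Fin 3 → F))
    (hX : ∀ v ∈ W, Matrix.vecMul v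
      (!![-b ^ q, b, b ^ (q + 1); 1, 0, b ^ q; 1, 1, -b] : Matrix (Fin 3) (Fin 3) F) ∈ W)
    (hY : ∀ v ∈ W, Matrix.vecMul v
      (!![0, 0, (a : F); 0, -1, 0; (a : F)⁻¹, 0, 0] : Matrix (Fin 3) (Fin 3) F) ∈ W)
    (hZ : ∀ v ∈ W, Matrix.vecMul v
      (!![0, 0, 1; 0, -1, 0; 1, 0, 0] : Matrix (Fin 3) (Fin 3) F) ∈ W) :
    W = ⊥ ∨ W = ⊤ := by
  classical
  by_cases hWbot : W = ⊥
  · exact Or.inl hWbot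
  right
  have ha0 : (a : F) ≠ 0 := a.ne_zero
  have ha1 : (a : F) ≠ 1 := fun h => ha (by rw [h, one_pow])
  have hane : (a : F) ≠ (a : F)⁻¹ := by
    intro h
    have h2 := mul_inv_cancel₀ ha0
    rw [← h] at h2
    exact ha (by rw [sq]; exact h2)
  have hai1 : (a : F)⁻¹ ≠ 1 := fun h => ha1 (inv_eq_one.mp h)
  have hc0 : ((a:F) - 1) * ((a:F) - (a:F)⁻¹) ≠ 0 :=
    mul_ne_zero (sub_ne_zero.mpr ha1) (sub_ne_zero.mpr hane)
  have hc1 : (1 - (a:F)) * (1 - (a:F)⁻¹) ≠ 0 :=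
    mul_ne_zero (sub_ne_zero.mpr (Ne.symm ha1)) (sub_ne_zero.mpr (Ne.symm hai1))
  have hc2 : ((a:F)⁻¹ - 1) * ((a:F)⁻¹ - (a:F)) ≠ 0 :=
    mul_ne_zero (sub_ne_zero.mpr hai1) (sub_ne_zero.mpr (Ne.symm hane))
  -- diagonal action
  have hD : ∀ v ∈ W, (![(a : F) * v 0, v 1, (a : F)⁻¹ * v 2] : Fin 3 → F) ∈ W := by
    intro v hv
    have h1 := hZ _ (hY v hv)
    have he : Matrix.vecMul (Matrix.vecMul v
        (!![0, 0, (a : F); 0, -1, 0; (a : F)⁻¹, 0, 0] : Matrix (Fin 3) (Fin 3) F))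
        (!![0, 0, 1; 0, -1, 0; 1, 0, 0] : Matrix (Fin 3) (Fin 3) F)
        = ![(a : F) * v 0, v 1, (a : F)⁻¹ * v 2] := by
      funext j
      fin_cases j <;>
        simp [Matrix.vecMul, dotProduct, Fin.sum_univ_three, Matrix.vecHead, Matrix.vecTail] <;> ring
    rwa [he] at h1
  -- coordinate extraction
  have hE : ∀ v ∈ W, (![v 0, 0, 0] : Fin 3 → F) ∈ W ∧
      (![0, v 1, 0] : Fin 3 → F) ∈ W ∧ (![0, 0, v 2] : Fin 3 → F) ∈ W := by
    intro v hv
    have hv1 := hD v hv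
    have hv2 := hD _ hv1
    simp only [Matrix.cons_val_zero, Matrix.cons_val_one, Matrix.head_cons,
      Matrix.cons_val_two, Matrix.tail_cons] at hv2
    refine ⟨?_, ?_, ?_⟩
    · have hm := W.add_mem (W.sub_mem hv2 (W.smul_mem (1 + (a:F)⁻¹) hv1))
        (W.smul_mem (a:F)⁻¹ hv)
      have heq : ((![(a:F) * ((a:F) * v 0), v 1, (a:F)⁻¹ * ((a:F)⁻¹ * v 2)] : Fin 3 → F)
          - (1 + (a:F)⁻¹) • ![(a:F) * v 0, v 1, (a:F)⁻¹ * v 2]) + (a:F)⁻¹ • v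
          = (((a:F) - 1) * ((a:F) - (a:F)⁻¹)) • ![v 0, 0, 0] := by
        funext j
        fin_cases j <;>
          simp [Pi.smul_apply, smul_eq_mul] <;> (try field_simp) <;> (try ring)
      rw [heq] at hm
      have := W.smul_mem (((a:F) - 1) * ((a:F) - (a:F)⁻¹))⁻¹ hm
      rwa [smul_smul, inv_mul_cancel₀ hc0, one_smul] at this
    · have hm := W.add_mem (W.sub_mem hv2 (W.smul_mem ((a:F) + (a:F)⁻¹) hv1))
        (W.smul_mem (1:F) hv)
      have heq : ((![(a:F) * ((a:F) * v 0), v 1, (a:F)⁻¹ * ((a:F)⁻¹ * v 2)] : Fin 3 → F)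
          - ((a:F) + (a:F)⁻¹) • ![(a:F) * v 0, v 1, (a:F)⁻¹ * v 2]) + (1:F) • v
          = ((1 - (a:F)) * (1 - (a:F)⁻¹)) • ![0, v 1, 0] := by
        funext j
        fin_cases j <;>
          simp [Pi.smul_apply, smul_eq_mul] <;> (try field_simp) <;> (try ring)
      rw [heq] at hm
      have := W.smul_mem ((1 - (a:F)) * (1 - (a:F)⁻¹))⁻¹ hm
      rwa [smul_smul, inv_mul_cancel₀ hc1, one_smul] at this
    · have hm := W.add_mem (W.sub_mem hv2 (W.smul_mem ((a:F) + 1) hv1))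
        (W.smul_mem (a:F) hv)
      have heq : ((![(a:F) * ((a:F) * v 0), v 1, (a:F)⁻¹ * ((a:F)⁻¹ * v 2)] : Fin 3 → F)
          - ((a:F) + 1) • ![(a:F) * v 0, v 1, (a:F)⁻¹ * v 2]) + (a:F) • v
          = (((a:F)⁻¹ - 1) * ((a:F)⁻¹ - (a:F))) • ![0, 0, v 2] := by
        funext j
        fin_cases j <;>
          simp [Pi.smul_apply, smul_eq_mul] <;> (try field_simp) <;> (try ring)
      rw [heq] at hm
      have := W.smul_mem (((a:F)⁻¹ - 1) * ((a:F)⁻¹ - (a:F)))⁻¹ hm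
      rwa [smul_smul, inv_mul_cancel₀ hc2, one_smul] at this
  -- basis vector helpers
  have hu0 : ∀ v ∈ W, v 0 ≠ 0 → (![1, 0, 0] : Fin 3 → F) ∈ W := by
    intro v hv h
    have hm := W.smul_mem (v 0)⁻¹ (hE v hv).1
    have heq : (v 0)⁻¹ • (![v 0, 0, 0] : Fin 3 → F) = ![1, 0, 0] := by
      funext j; fin_cases j <;> simp [Pi.smul_apply, smul_eq_mul, Matrix.vecHead, Matrix.vecTail, inv_mul_cancel₀ h]
    rwa [heq] at hm
  have hu1 : ∀ v ∈ W, v 1 ≠ 0 → (![0, 1, 0] : Fin 3 → F) ∈ W := by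
    intro v hv h
    have hm := W.smul_mem (v 1)⁻¹ (hE v hv).2.1
    have heq : (v 1)⁻¹ • (![0, v 1, 0] : Fin 3 → F) = ![0, 1, 0] := by
      funext j; fin_cases j <;> simp [Pi.smul_apply, smul_eq_mul, Matrix.vecHead, Matrix.vecTail, inv_mul_cancel₀ h]
    rwa [heq] at hm
  have hu2 : ∀ v ∈ W, v 2 ≠ 0 → (![0, 0, 1] : Fin 3 → F) ∈ W := by
    intro v hv h
    have hm := W.smul_mem (v 2)⁻¹ (hE v hv).2.2
    have heq : (v 2)⁻¹ • (![0, 0, v 2] : Fin 3 → F) = ![0, 0, 1] := by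
      funext j; fin_cases j <;> simp [Pi.smul_apply, smul_eq_mul, Matrix.vecHead, Matrix.vecTail, inv_mul_cancel₀ h]
    rwa [heq] at hm
  -- get a nonzero vector
  obtain ⟨v, hv, hvne⟩ : ∃ v ∈ W, v ≠ 0 := by
    by_contra h
    push_neg at h
    exact hWbot ((Submodule.eq_bot_iff W).mpr h)
  have hbq : b ^ q ≠ 0 := pow_ne_zero _ hb0
  have hbq1 : b ^ (q + 1) ≠ 0 := pow_ne_zero _ hb0
  -- compute rows of X
  have hXrow : ∀ w : Fin 3 → F, Matrix.vecMul w
      (!![-b ^ q, b, b ^ (q + 1); 1, 0, b ^ q; 1, 1, -b] : Matrix (Fin 3) (Fin 3) F)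
      = ![w 0 * (-b ^ q) + w 1 + w 2, w 0 * b + w 2,
          w 0 * b ^ (q + 1) + w 1 * b ^ q + w 2 * (-b)] := by
    intro w
    funext j
    fin_cases j <;>
      simp [Matrix.vecMul, dotProduct, Fin.sum_univ_three, Matrix.vecHead, Matrix.vecTail] <;> ring
  -- e0 ∈ W
  have he0 : (![1, 0, 0] : Fin 3 → F) ∈ W := by
    have hcoord : v 0 ≠ 0 ∨ v 1 ≠ 0 ∨ v 2 ≠ 0 := by
      by_contra h
      push_neg at h
      exact hvne (by funext j; fin_cases j <;> simp [h.1, h.2.1, h.2.2])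
    rcases hcoord with h | h | h
    · exact hu0 v hv h
    · -- e1 ∈ W, e1 X = (1, 0, b^q)
      have he1 := hu1 v hv h
      have hm := hX _ he1
      rw [hXrow] at hm
      refine hu0 _ hm ?_
      simp
    · have he2 := hu2 v hv h
      have hm := hX _ he2
      rw [hXrow] at hm
      refine hu0 _ hm ?_
      simp
  -- row 0 of X gives e1, e2
  have hm0 := hX _ he0
  rw [hXrow] at hm0
  have he1 : (![0, 1, 0] : Fin 3 → F) ∈ W := by
    refine hu1 _ hm0 ?_
    simpa using hb0
  have he2 : (![0, 0, 1] : Fin 3 → F) ∈ W := by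
    refine hu2 _ hm0 ?_
    simpa using hbq1
  -- conclude W = ⊤
  refine eq_top_iff.mpr ?_
  intro w _
  have hw : w = w 0 • (![1,0,0] : Fin 3 → F) + w 1 • ![0,1,0] + w 2 • ![0,0,1] := by
    funext j; fin_cases j <;> simp [Matrix.vecHead, Matrix.vecTail]
  rw [hw]
  exact W.add_mem (W.add_mem (W.smul_mem _ he0) (W.smul_mem _ he1)) (W.smul_mem _ he2)
end

section
/- Let q be an odd prime power, b ∈ F_{q²} with b + b^q = 1 and b ≠ b^q, and a ∈ F_{q²}^× with a ≠ 1 and a² ≠ 1. Define X, Y, Z as the matrices in Construction 2.2 over F_{q²}. There is no symmetric invertible 3×3 matrix B over F_{q²} such that X^T B X = B, Y^T B Y = B, and Z^T B Z = B. -/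
/-!
Invariance under `Z` and `Y` forces `B` to have the shape `c` at the two antidiagonal corners,
`d` in the centre and `0` elsewhere. For such a `B`, the `(0,1)` entry of `Xᵀ B X = B` reads
`c (b - b^q) = 0` and the `(1,1)` entry reads `2 b c = d`, so `B = 0`, which is not invertible.
-/

open Matrix

variable {F : Type*} [Field F]

lemma eq_antidiag_of_transpose_mul_mul_eq {B : Matrix (Fin 3) (Fin 3) F} (hB : B.IsSymm)
    {s t : F} (ht : t ^ 2 ≠ 1)
    (hY : (!![0, 0, s; 0, -1, 0; t, 0, 0])ᵀ * B * !![0, 0, s; 0, -1, 0; t, 0, 0] = B)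
    (hZ : (!![0, 0, 1; 0, -1, 0; 1, 0, 0] : Matrix (Fin 3) (Fin 3) F)ᵀ * B *
      !![0, 0, 1; 0, -1, 0; 1, 0, 0] = B) :
    B = !![0, 0, B 0 2; 0, B 1 1, 0; B 0 2, 0, 0] := by
  have hY00 : t * B 2 2 * t = B 0 0 := by
    simpa [mul_apply, Fin.sum_univ_three] using congrFun₂ hY 0 0
  have hY01 : -(t * B 2 1) = B 0 1 := by
    simpa [mul_apply, Fin.sum_univ_three] using congrFun₂ hY 0 1
  have hZ00 : B 2 2 = B 0 0 := by simpa [mul_apply, Fin.sum_univ_three] using congrFun₂ hZ 0 0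
  have hZ01 : -B 2 1 = B 0 1 := by simpa [mul_apply, Fin.sum_univ_three] using congrFun₂ hZ 0 1
  have ht1 : t ≠ 1 := by rintro rfl; exact ht (one_pow 2)
  have h00 : B 0 0 = 0 := by
    have : (t ^ 2 - 1) * B 0 0 = 0 := by linear_combination hY00 - t ^ 2 * hZ00
    exact (mul_eq_zero.mp this).resolve_left (sub_ne_zero.mpr ht)
  have h21 : B 2 1 = 0 := by
    have : (t - 1) * B 2 1 = 0 := by linear_combination hZ01 - hY01
    exact (mul_eq_zero.mp this).resolve_left (sub_ne_zero.mpr ht1)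
  have h22 : B 2 2 = 0 := hZ00.trans h00
  have h01 : B 0 1 = 0 := by rw [← hZ01, h21, neg_zero]
  ext i j
  fin_cases i <;> fin_cases j <;>
    simp [h00, h01, h21, h22, hB.apply 0 1, hB.apply 2 1, hB.apply 0 2]

lemma antidiag_eq_zero_of_transpose_mul_mul_eq {b b' c d x y z : F} (hb : b ≠ b')
    (hX : (!![-b', b, x; 1, 0, y; 1, 1, z])ᵀ * !![0, 0, c; 0, d, 0; c, 0, 0] *
      !![-b', b, x; 1, 0, y; 1, 1, z] = !![0, 0, c; 0, d, 0; c, 0, 0]) :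
    !![0, 0, c; 0, d, 0; c, 0, 0] = 0 := by
  have h01 : c * b - b' * c = 0 := by
    simpa [mul_apply, Fin.sum_univ_three, sub_eq_add_neg] using congrFun₂ hX 0 1
  have h11 : c * b + b * c = d := by
    simpa [mul_apply, Fin.sum_univ_three] using congrFun₂ hX 1 1
  have hc : c = 0 :=
    (mul_eq_zero.mp (by linear_combination h01 : c * (b - b') = 0)).resolve_right
      (sub_ne_zero.mpr hb)
  have hd : d = 0 := by rw [← h11, hc]; ring
  rw [hc, hd]
  exact (etaExpand_eq 0 : _ = (0 : Matrix (Fin 3) (Fin 3) F))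

theorem stmt_7_general (q : ℕ) (F : Type) [Field F]
    (b : F) (hb2 : b ≠ b ^ q)
    (a : Fˣ) (ha2 : (a : F) ^ 2 ≠ 1) :
    ¬ ∃ B : Matrix (Fin 3) (Fin 3) F, B.IsSymm ∧ IsUnit B ∧
      (!![-b ^ q, b, b ^ (q + 1); 1, 0, b ^ q; 1, 1, -b] : Matrix (Fin 3) (Fin 3) F)ᵀ * B *
        !![-b ^ q, b, b ^ (q + 1); 1, 0, b ^ q; 1, 1, -b] = B ∧
      (!![0, 0, (a : F); 0, -1, 0; (a : F)⁻¹, 0, 0] : Matrix (Fin 3) (Fin 3) F)ᵀ * B *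
        !![0, 0, (a : F); 0, -1, 0; (a : F)⁻¹, 0, 0] = B ∧
      (!![0, 0, 1; 0, -1, 0; 1, 0, 0] : Matrix (Fin 3) (Fin 3) F)ᵀ * B *
        !![0, 0, 1; 0, -1, 0; 1, 0, 0] = B := by
  rintro ⟨B, hB, hunit, hX, hY, hZ⟩
  have ha : (a : F)⁻¹ ^ 2 ≠ 1 := by rwa [inv_pow, inv_ne_one]
  rw [eq_antidiag_of_transpose_mul_mul_eq hB ha hY hZ] at hunit hX
  rw [antidiag_eq_zero_of_transpose_mul_mul_eq hb2 hX] at hunit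
  exact not_isUnit_zero hunit

/-- There is no symmetric invertible matrix `B` simultaneously invariant under
`X`, `Y`, `Z` of Construction 2.2 (so `⟨X,Y,Z⟩` lies in no orthogonal group `SO₃(q)`). -/
theorem stmt_7 (p f q : ℕ) (hp : Nat.Prime p) (hpodd : Odd p) (hq : q = p ^ f)
    (F : Type) [Field F] [Fintype F] (hF : Fintype.card F = q ^ 2)
    (b : F) (hb1 : b + b ^ q = 1) (hb2 : b ≠ b ^ q)
    (a : Fˣ) (ha1 : (a : F) ≠ 1) (ha2 : (a : F) ^ 2 ≠ 1) :
    ¬ ∃ B : Matrix (Fin 3) (Fin 3) F, B.IsSymm ∧ IsUnit B ∧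
      (!![-b ^ q, b, b ^ (q + 1); 1, 0, b ^ q; 1, 1, -b] : Matrix (Fin 3) (Fin 3) F)ᵀ * B *
        !![-b ^ q, b, b ^ (q + 1); 1, 0, b ^ q; 1, 1, -b] = B ∧
      (!![0, 0, (a : F); 0, -1, 0; (a : F)⁻¹, 0, 0] : Matrix (Fin 3) (Fin 3) F)ᵀ * B *
        !![0, 0, (a : F); 0, -1, 0; (a : F)⁻¹, 0, 0] = B ∧
      (!![0, 0, 1; 0, -1, 0; 1, 0, 0] : Matrix (Fin 3) (Fin 3) F)ᵀ * B *
        !![0, 0, 1; 0, -1, 0; 1, 0, 0] = B :=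
  stmt_7_general q F b hb2 a ha2
end

section
/- Let q = 2^f ≥ 4 and I = {0, f, 2f/gcd(3,f), 4f/gcd(3,f)}. Let b ∈ F_{q²}^× satisfy b + b^q = 1 and b^{q+1} ≠ 1. Then there exists an element a of multiplicative order q+1 in F_{q²}^× such that: (1) (1 + b + b²)^{2^i} ≠ a + a⁻¹ + 1 for all i ∈ I; (2) (1 + b + b²)^{2^i} ≠ a(1 + b + b³ + b⁴) + a⁻¹(b² + b³ + b⁴) for all i ∈ I; (3) a + a⁻¹ + 1 ≠ a(1 + b + b³ + b⁴) + a⁻¹(b² + b³ + b⁴); (4) a + a⁻¹ + 1 ≠ 0. -/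
/-!
In characteristic 2 we have `b ^ q = 1 + b`, so `c = 1 + b + b²` satisfies `c ^ q = c` and the
values `c ^ 2 ^ i`, `i ∈ I`, are among at most three elements. For each such value, conditions (1)
and (2) say that `a` is not a root of a nonzero quadratic, and so does (3); together they exclude at
most 14 units, while (4) only excludes cube roots of unity. For `q ≥ 16` the cyclic group `F^×`
has `φ(q + 1) > 14` elements of order `q + 1`, so one of them works. For `q = 4, 8` there are too
few (`φ 5 = 4`, `φ 9 = 6`) and `a` is given explicitly as a polynomial in `b`, which is then a
root of `X⁴ + X + 1`, resp. `X⁶ + X⁵ + X³ + X² + 1`.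
-/

open Finset Polynomial
open scoped Nat

theorem Nat.le_totient_sq_of_odd {n : ℕ} (hn : Odd n) : n ≤ φ n ^ 2 := by
  induction n using Nat.recOnPosPrimePosCoprime with
  | zero => simp at hn
  | one => simp
  | prime_pow p k hp hk =>
    obtain ⟨m, rfl⟩ : ∃ m, p = m + 1 := ⟨p - 1, by have := hp.pos; omega⟩
    have hm : 2 ≤ m := by
      have := Nat.odd_iff.mp ((Nat.odd_pow_iff hk.ne').mp hn)
      have := hp.two_le
      omega
    rw [Nat.totient_prime_pow hp hk, Nat.add_sub_cancel]
    obtain ⟨k, rfl⟩ : ∃ j, k = j + 1 := ⟨k - 1, by omega⟩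
    calc (m + 1) ^ (k + 1) = (m + 1) ^ k * (m + 1) := pow_succ _ _
      _ ≤ ((m + 1) ^ k) ^ 2 * m ^ 2 :=
        Nat.mul_le_mul (Nat.le_self_pow two_ne_zero _) (by nlinarith)
      _ = ((m + 1) ^ (k + 1 - 1) * m) ^ 2 := by rw [Nat.add_sub_cancel]; ring
  | coprime a b _ _ hab iha ihb =>
    obtain ⟨hoa, hob⟩ := Nat.odd_mul.mp hn
    rw [Nat.totient_mul hab, mul_pow]
    exact Nat.mul_le_mul (iha hoa) (ihb hob)

theorem Nat.fourteen_lt_totient_two_pow_add_one {f : ℕ} (hf : 4 ≤ f) :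
    14 < φ (2 ^ f + 1) := by
  by_cases hf7 : f ≤ 7
  · interval_cases f <;> decide
  · have h257 : 2 ^ 8 ≤ 2 ^ f := Nat.pow_le_pow_right two_pos (by omega)
    have hodd : Odd (2 ^ f + 1) := (Nat.even_pow.mpr ⟨even_two, by omega⟩).add_one
    have := Nat.le_totient_sq_of_odd hodd
    by_contra! h
    have := Nat.pow_le_pow_left h 2
    omega

theorem pow_two_pow_eq_pow_two_pow_mod {M : Type*} [Monoid M] {c : M} {f : ℕ}
    (hc : c ^ 2 ^ f = c) (i : ℕ) : c ^ 2 ^ i = c ^ 2 ^ (i % f) := by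
  have hk (k : ℕ) : c ^ 2 ^ (f * k) = c := by
    induction k with
    | zero => simp
    | succ k ih => rw [mul_add_one, pow_add, pow_mul, ih, hc]
  conv_lhs => rw [← Nat.div_add_mod i f, pow_add, pow_mul, hk]

theorem pow_two_pow_mem_of_mem_insert {M : Type*} [Monoid M] [DecidableEq M] {c : M}
    {f x y i : ℕ} (hc : c ^ 2 ^ f = c) (hi : i ∈ ({0, f, x, y} : Set ℕ)) :
    c ^ 2 ^ i ∈ ({c, c ^ 2 ^ x, c ^ 2 ^ y} : Finset M) := by
  rcases hi with rfl | rfl | rfl | rfl <;> simp [hc]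

section QuadraticRoots

variable {K : Type*} [Field K]

theorem quadratic_ne_zero {p q r : K} (h : p ≠ 0 ∨ q ≠ 0) :
    C p * X ^ 2 + C q * X + C r ≠ 0 := by
  intro h0
  rcases h with h | h
  · exact h (by simpa using congrArg (coeff · 2) h0)
  · exact h (by simpa using congrArg (coeff · 1) h0)

variable [Fintype K] [DecidableEq K]

def quadRoots (p q r : K) : Finset Kˣ := {a | p * (a : K) ^ 2 + q * a + r = 0}

theorem card_quadRoots_le_two {p q r : K} (h : p ≠ 0 ∨ q ≠ 0) : #(quadRoots p q r) ≤ 2 := by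
  rw [← card_map ⟨Units.val, Units.val_injective⟩]
  refine (card_le_degree_of_subset_roots fun z hz => ?_).trans
    (natDegree_quadratic_le (a := p) (b := q) (c := r))
  obtain ⟨a, ha, rfl⟩ := Finset.mem_map.mp hz
  rw [mem_roots (quadratic_ne_zero h)]
  simpa [quadRoots] using ha

end QuadraticRoots

section Admissible

variable {K : Type*} [Field K]

theorem add_inv_add_one_ne_zero {a : Kˣ} (ha : ¬ orderOf a ∣ 3) :
    (a : K) + (a : K)⁻¹ + 1 ≠ 0 := by
  refine fun h => ha (orderOf_dvd_of_pow_eq_one (Units.ext ?_))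
  have := a.ne_zero
  push_cast
  grind

/-- The conditions of the theorem on `a`, with `C` the set of values `(1 + b + b²) ^ 2 ^ i`,
`u = 1 + b + b³ + b⁴` and `v = b² + b³ + b⁴`. -/
def IsAdmissible (C : Set K) (u v : K) (a : Kˣ) : Prop :=
  (∀ c ∈ C, c ≠ (a : K) + (a : K)⁻¹ + 1) ∧ (∀ c ∈ C, c ≠ (a : K) * u + (a : K)⁻¹ * v) ∧
    (a : K) + (a : K)⁻¹ + 1 ≠ (a : K) * u + (a : K)⁻¹ * v ∧ (a : K) + (a : K)⁻¹ + 1 ≠ 0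

theorem IsAdmissible.mono {C C' : Set K} {u v : K} {a : Kˣ} (h : IsAdmissible C u v a)
    (hC : C' ⊆ C) : IsAdmissible C' u v a :=
  ⟨fun c hc => h.1 c (hC hc), fun c hc => h.2.1 c (hC hc), h.2.2⟩

theorem exists_orderOf_eq_isAdmissible [Fintype K] [DecidableEq K] {n : ℕ}
    (hn : n ∣ Fintype.card Kˣ) (hn3 : ¬ n ∣ 3) (C : Finset K) {u v : K} (hu : u ≠ 0)
    (hC : 4 * #C + 2 < φ n) : ∃ a : Kˣ, orderOf a = n ∧ IsAdmissible C u v a := by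
  set B : Finset Kˣ := (C.biUnion fun c => quadRoots 1 (1 - c) 1 ∪ quadRoots u (-c) v) ∪
    quadRoots (1 - u) 1 (1 - v)
  have hB : #B ≤ 4 * #C + 2 := by
    refine (card_union_le _ _).trans (add_le_add ?_ (card_quadRoots_le_two (.inr one_ne_zero)))
    refine card_biUnion_le.trans ?_
    rw [mul_comm, ← smul_eq_mul]
    refine sum_le_card_nsmul _ _ _ fun c _ => (card_union_le _ _).trans ?_
    exact add_le_add (card_quadRoots_le_two (.inl one_ne_zero)) (card_quadRoots_le_two (.inl hu))
  rw [← IsCyclic.card_orderOf_eq_totient hn] at hC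
  obtain ⟨a, ha, haB⟩ := exists_mem_notMem_of_card_lt_card (hB.trans_lt hC)
  replace ha : orderOf a = n := (mem_filter.mp ha).2
  have ha0 := a.ne_zero
  simp only [B, mem_union, mem_biUnion, quadRoots, mem_filter, mem_univ, true_and, not_or,
    not_exists, not_and] at haB
  refine ⟨a, ha, fun c hc h => (haB.1 c hc).1 ?_, fun c hc h => (haB.1 c hc).2 ?_,
    fun h => haB.2 ?_, add_inv_add_one_ne_zero (ha ▸ hn3)⟩ <;> grind

theorem add_one_dvd_card_units_of_card_eq_sq [Fintype K] [DecidableEq K] {q : ℕ}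
    (hK : Fintype.card K = q ^ 2) : q + 1 ∣ Fintype.card Kˣ := by
  rw [Fintype.card_units, hK, ← one_pow 2, sq_tsub_sq]
  exact dvd_mul_right _ _

theorem exists_orderOf_eq_isAdmissible_of_four_le [Fintype K] [DecidableEq K] {f : ℕ}
    (hf : 4 ≤ f) (hK : Fintype.card K = (2 ^ f) ^ 2) (C : Finset K) (hC : #C ≤ 3) {u v : K}
    (hu : u ≠ 0) : ∃ a : Kˣ, orderOf a = 2 ^ f + 1 ∧ IsAdmissible C u v a := by
  refine exists_orderOf_eq_isAdmissible (add_one_dvd_card_units_of_card_eq_sq hK)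
    (fun h => ?_) C hu ?_
  · have := Nat.le_of_dvd three_pos h
    have := Nat.pow_le_pow_right two_pos hf
    omega
  · have := Nat.fourteen_lt_totient_two_pow_add_one hf
    omega

end Admissible

section CharTwo

variable {K : Type*} [Field K]

theorem charP_two_of_card_eq_two_pow [Fintype K] {n : ℕ} (h : Fintype.card K = 2 ^ n) :
    CharP K 2 :=
  CharTwo.of_one_ne_zero_of_two_eq_zero one_ne_zero
    (pow_eq_zero_iff' (n := n).mp (by exact_mod_cast h ▸ FiniteField.cast_card_eq_zero K)).1

variable [CharP K 2] {b : K}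

theorem one_add_self_add_sq_ne_zero {q : ℕ} (hq : ¬ 3 ∣ q) (hbq : b ^ q = 1 + b)
    (hb : b ^ (q + 1) ≠ 1) : 1 + b + b ^ 2 ≠ 0 := by
  intro hc
  -- `b` would be a cube root of unity, making `b ^ q` either `b` or `b⁻¹`
  have hb3 : b ^ 3 = 1 := by grind
  rcases (by omega : q % 3 = 1 ∨ (q + 1) % 3 = 0) with h | h
  · rw [pow_eq_pow_mod q hb3, h] at hbq
    grind
  · rw [pow_eq_pow_mod (q + 1) hb3, h] at hb
    exact hb (pow_zero b)

theorem one_add_self_add_pow_three_add_pow_four_ne_zero (hb : b ≠ 1) (hc : 1 + b + b ^ 2 ≠ 0) :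
    1 + b + b ^ 3 + b ^ 4 ≠ 0 := by
  have h1 : 1 + b ≠ 0 := fun h => hb (by grind)
  have : 1 + b + b ^ 3 + b ^ 4 = (1 + b) ^ 2 * (1 + b + b ^ 2) := by grind
  rw [this]
  exact mul_ne_zero (pow_ne_zero 2 h1) hc

theorem one_add_self_add_sq_pow_two_pow {f : ℕ} (hbq : b ^ 2 ^ f = 1 + b) :
    (1 + b + b ^ 2) ^ 2 ^ f = 1 + b + b ^ 2 := by
  have : Fact (Nat.Prime 2) := ⟨Nat.prime_two⟩
  rw [add_pow_char_pow, add_pow_char_pow, one_pow, ← pow_mul, mul_comm, pow_mul, hbq]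
  grind

theorem exists_isAdmissible_of_pow_four (hb : b ^ 4 = b + 1) :
    ∃ a : Kˣ, orderOf a = 5 ∧
      IsAdmissible {1 + b + b ^ 2} (1 + b + b ^ 3 + b ^ 4) (b ^ 2 + b ^ 3 + b ^ 4) a := by
  -- `b` has order 15 and `a = b⁻³`
  have hmul : (1 + b + b ^ 2 + b ^ 3) * b ^ 3 = 1 := by grind
  set a := Units.mkOfMulEqOne _ _ hmul
  have ha : (a : K) = 1 + b + b ^ 2 + b ^ 3 := rfl
  have : Fact (Nat.Prime 5) := ⟨by norm_num⟩
  have hord : orderOf a = 5 := by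
    refine orderOf_eq_prime (Units.ext ?_) fun h => ?_
    · push_cast [ha]
      grind
    · have := congrArg Units.val h
      push_cast [ha] at this
      grind
  refine ⟨a, hord, ?_, ?_, ?_, add_inv_add_one_ne_zero (by rw [hord]; decide)⟩ <;>
    simp only [Set.mem_singleton_iff, forall_eq, ha, inv_eq_of_mul_eq_one_right hmul] <;> grind

theorem exists_isAdmissible_of_pow_eight (hb : b ^ 8 = b + 1) (hc : 1 + b + b ^ 2 ≠ 0) :
    ∃ a : Kˣ, orderOf a = 9 ∧
      IsAdmissible {1 + b + b ^ 2, (1 + b + b ^ 2) ^ 2, (1 + b + b ^ 2) ^ 4}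
        (1 + b + b ^ 3 + b ^ 4) (b ^ 2 + b ^ 3 + b ^ 4) a := by
  have hS : b ^ 6 + b ^ 5 + b ^ 3 + b ^ 2 + 1 = 0 := by
    have : (1 + b + b ^ 2) * (b ^ 6 + b ^ 5 + b ^ 3 + b ^ 2 + 1) = 0 := by grind
    exact (mul_eq_zero.mp this).resolve_left hc
  have hmul : (1 + b ^ 2 + b ^ 5) * (1 + b + b ^ 2 + b ^ 4 + b ^ 5) = 1 := by grind
  set a := Units.mkOfMulEqOne _ _ hmul
  have ha : (a : K) = 1 + b ^ 2 + b ^ 5 := rfl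
  have : Fact (Nat.Prime 3) := ⟨by norm_num⟩
  have hord : orderOf a = 3 ^ 2 := by
    refine orderOf_eq_prime_pow (fun h => ?_) (Units.ext ?_)
    · have := congrArg Units.val h
      push_cast [ha] at this
      grind
    · push_cast [ha]
      grind
  refine ⟨a, hord, ?_, ?_, ?_, add_inv_add_one_ne_zero (by rw [hord]; decide)⟩ <;>
    simp only [Set.mem_insert_iff, Set.mem_singleton_iff, forall_eq_or_imp, forall_eq, ha,
      inv_eq_of_mul_eq_one_right hmul] <;> grind

end CharTwo

theorem stmt_9_general (f q : ℕ) (hq : q = 2 ^ f) (hq4 : 4 ≤ q)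
    (F : Type) [Field F] [Fintype F] (hF : Fintype.card F = q ^ 2)
    (b : F) (hb1 : b + b ^ q = 1) (hb2 : b ^ (q + 1) ≠ 1) :
    ∃ a : Fˣ, orderOf a = q + 1 ∧
      (∀ i ∈ ({0, f, 2 * f / Nat.gcd 3 f, 4 * f / Nat.gcd 3 f} : Set ℕ),
        (1 + b + b ^ 2) ^ 2 ^ i ≠ (a : F) + (a : F)⁻¹ + 1) ∧
      (∀ i ∈ ({0, f, 2 * f / Nat.gcd 3 f, 4 * f / Nat.gcd 3 f} : Set ℕ),
        (1 + b + b ^ 2) ^ 2 ^ i ≠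
          (a : F) * (1 + b + b ^ 3 + b ^ 4) + (a : F)⁻¹ * (b ^ 2 + b ^ 3 + b ^ 4)) ∧
      (a : F) + (a : F)⁻¹ + 1 ≠
        (a : F) * (1 + b + b ^ 3 + b ^ 4) + (a : F)⁻¹ * (b ^ 2 + b ^ 3 + b ^ 4) ∧
      (a : F) + (a : F)⁻¹ + 1 ≠ 0 := by
  classical
  subst hq
  have : CharP F 2 := charP_two_of_card_eq_two_pow (n := f * 2) (by rw [hF, pow_mul])
  have hbq : b ^ 2 ^ f = 1 + b := by grind
  have hc := one_add_self_add_sq_ne_zero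
    (fun h => by simpa using Nat.prime_three.dvd_of_dvd_pow h) hbq hb2
  have hcq := one_add_self_add_sq_pow_two_pow hbq
  suffices ∃ a : Fˣ, orderOf a = 2 ^ f + 1 ∧ IsAdmissible (({1 + b + b ^ 2,
      (1 + b + b ^ 2) ^ 2 ^ (2 * f / Nat.gcd 3 f), (1 + b + b ^ 2) ^ 2 ^ (4 * f / Nat.gcd 3 f)} :
        Finset F) : Set F) (1 + b + b ^ 3 + b ^ 4) (b ^ 2 + b ^ 3 + b ^ 4) a by
    obtain ⟨a, ha, h1, h2, h3, h4⟩ := this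
    exact ⟨a, ha, fun i hi => h1 _ (pow_two_pow_mem_of_mem_insert hcq hi),
      fun i hi => h2 _ (pow_two_pow_mem_of_mem_insert hcq hi), h3, h4⟩
  have hf : 2 ≤ f := by
    by_contra!
    interval_cases f <;> omega
  obtain rfl | rfl | hf4 : f = 2 ∨ f = 3 ∨ 4 ≤ f := by omega
  · obtain ⟨a, ha, h⟩ := exists_isAdmissible_of_pow_four (b := b) (by grind)
    refine ⟨a, ha, h.mono ?_⟩
    rw [pow_two_pow_eq_pow_two_pow_mod hcq (2 * 2 / _),
      pow_two_pow_eq_pow_two_pow_mod hcq (4 * 2 / _)]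
    norm_num
  · obtain ⟨a, ha, h⟩ := exists_isAdmissible_of_pow_eight (by grind) hc
    refine ⟨a, ha, h.mono ?_⟩
    rw [pow_two_pow_eq_pow_two_pow_mod hcq (2 * 3 / _),
      pow_two_pow_eq_pow_two_pow_mod hcq (4 * 3 / _)]
    norm_num [Set.insert_subset_iff]
  · exact exists_orderOf_eq_isAdmissible_of_four_le hf4 hF _ card_le_three
      (one_add_self_add_pow_three_add_pow_four_ne_zero (fun h => by grind) hc)

/-- Lemma 3.1 (existence of `a` for even characteristic). -/
theorem stmt_9 (f q : ℕ) (hq : q = 2 ^ f) (hq4 : 4 ≤ q)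
    (F : Type) [Field F] [Fintype F] (hF : Fintype.card F = q ^ 2)
    (b : F) (hb0 : b ≠ 0) (hb1 : b + b ^ q = 1) (hb2 : b ^ (q + 1) ≠ 1) :
    ∃ a : Fˣ, orderOf a = q + 1 ∧
      (∀ i ∈ ({0, f, 2 * f / Nat.gcd 3 f, 4 * f / Nat.gcd 3 f} : Set ℕ),
        (1 + b + b ^ 2) ^ 2 ^ i ≠ (a : F) + (a : F)⁻¹ + 1) ∧
      (∀ i ∈ ({0, f, 2 * f / Nat.gcd 3 f, 4 * f / Nat.gcd 3 f} : Set ℕ),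
        (1 + b + b ^ 2) ^ 2 ^ i ≠
          (a : F) * (1 + b + b ^ 3 + b ^ 4) + (a : F)⁻¹ * (b ^ 2 + b ^ 3 + b ^ 4)) ∧
      (a : F) + (a : F)⁻¹ + 1 ≠
        (a : F) * (1 + b + b ^ 3 + b ^ 4) + (a : F)⁻¹ * (b ^ 2 + b ^ 3 + b ^ 4) ∧
      (a : F) + (a : F)⁻¹ + 1 ≠ 0 :=
  stmt_9_general f q hq hq4 F hF b hb1 hb2
end

section
/- Let q = 2^f with f ≥ 1, and let b ∈ F_{q²} with b + b^q = 1. Let a ∈ F_{q²}^× have multiplicative order q+1. Define Y = [[ab + a⁻¹b^q, 0, a(b + b^{q+1}) + a⁻¹(b^q + b^{q+1})],[0,1,0],[a + a⁻¹, 0, ab + a⁻¹b^q]] and Z = [[1,0,1],[0,1,0],[0,0,1]] over F_{q²}. Then the characteristic polynomial of ZY is (λ + a)(λ + a⁻¹)(λ + 1), and the eigenvalues of ZY are a, a⁻¹, and 1; consequently ZY has order q+1 in GL₃(F_{q²}). -/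
open Matrix Polynomial

/-- For Construction 3.2, `ZY` has characteristic polynomial `(λ+a)(λ+a⁻¹)(λ+1)`,
eigenvalues `a`, `a⁻¹`, `1`, and order `q+1`. -/
theorem stmt_12 (f q : ℕ) (hf : 1 ≤ f) (hq : q = 2 ^ f)
    (F : Type) [Field F] [Fintype F] (hF : Fintype.card F = q ^ 2)
    (b : F) (hb : b + b ^ q = 1) (a : Fˣ) (ha : orderOf a = q + 1) :
    Matrix.charpoly
        ((!![1, 0, 1; 0, 1, 0; 0, 0, 1] : Matrix (Fin 3) (Fin 3) F) *
          !![(a : F) * b + (a : F)⁻¹ * b ^ q, 0,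
              (a : F) * (b + b ^ (q + 1)) + (a : F)⁻¹ * (b ^ q + b ^ (q + 1));
             0, 1, 0;
             (a : F) + (a : F)⁻¹, 0, (a : F) * b + (a : F)⁻¹ * b ^ q]) =
      (X + C (a : F)) * (X + C ((a : F)⁻¹)) * (X + 1) ∧
    (∀ μ ∈ ({(a : F), (a : F)⁻¹, 1} : Set F),
      Module.End.HasEigenvalue
        (Matrix.toLin'
          ((!![1, 0, 1; 0, 1, 0; 0, 0, 1] : Matrix (Fin 3) (Fin 3) F) *
            !![(a : F) * b + (a : F)⁻¹ * b ^ q, 0,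
                (a : F) * (b + b ^ (q + 1)) + (a : F)⁻¹ * (b ^ q + b ^ (q + 1));
               0, 1, 0;
               (a : F) + (a : F)⁻¹, 0, (a : F) * b + (a : F)⁻¹ * b ^ q])) μ) ∧
    orderOf
        ((!![1, 0, 1; 0, 1, 0; 0, 0, 1] : Matrix (Fin 3) (Fin 3) F) *
          !![(a : F) * b + (a : F)⁻¹ * b ^ q, 0,
              (a : F) * (b + b ^ (q + 1)) + (a : F)⁻¹ * (b ^ q + b ^ (q + 1));
             0, 1, 0;
             (a : F) + (a : F)⁻¹, 0, (a : F) * b + (a : F)⁻¹ * b ^ q]) = q + 1 := by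
  -- characteristic 2
  haveI hchar : CharP F 2 := by
    have hp := CharP.char_is_prime F (ringChar F)
    have ⟨n, hcard⟩ := FiniteField.card F (ringChar F)
    have hdvd : ringChar F ∣ 2 := by
      have h1 : ringChar F ∣ 2 ^ (f * 2) := by
        rw [pow_mul, ← hq, ← hF, hcard.2]
        exact dvd_pow_self _ n.2.ne'
      exact hp.dvd_of_dvd_pow h1
    have h2 : ringChar F = 2 := (Nat.prime_dvd_prime_iff_eq hp Nat.prime_two).mp hdvd
    exact h2 ▸ ringChar.charP F
  have h2 : (2 : F) = 0 := by have := CharP.cast_eq_zero F 2; simpa using this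
  have h2X : (2 : F[X]) = 0 := by have := CharP.cast_eq_zero F[X] 2; simpa using this
  set u : F := (a : F) with hu
  have hu0 : u ≠ 0 := a.ne_zero
  have hbq : b ^ q = 1 + b := by linear_combination hb - b * h2
  have hq2 : 2 ≤ q := by
    rw [hq]
    calc 2 = 2 ^ 1 := rfl
    _ ≤ 2 ^ f := Nat.pow_le_pow_right (by norm_num) hf
  -- the product matrix
  have hM : (!![1, 0, 1; 0, 1, 0; 0, 0, 1] : Matrix (Fin 3) (Fin 3) F) *
          !![u * b + u⁻¹ * b ^ q, 0, u * (b + b ^ (q + 1)) + u⁻¹ * (b ^ q + b ^ (q + 1));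
             0, 1, 0; u + u⁻¹, 0, u * b + u⁻¹ * b ^ q]
      = !![u + (u + u⁻¹) * b, 0, (u + u⁻¹) * (b + b ^ 2); 0, 1, 0;
           u + u⁻¹, 0, u⁻¹ + (u + u⁻¹) * b] := by
    rw [Matrix.mul_fin_three]
    ext i j
    fin_cases i <;> fin_cases j <;> simp [pow_succ, hbq] <;>
      first
      | ring1
      | linear_combination u⁻¹ * h2
      | linear_combination (u⁻¹ + u * b + u⁻¹ * b) * h2
      | linear_combination (u⁻¹ + u * b ^ 2 + u⁻¹ * b ^ 2) * h2
  rw [hM]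
  set N : Matrix (Fin 3) (Fin 3) F :=
    !![u + (u + u⁻¹) * b, 0, (u + u⁻¹) * (b + b ^ 2); 0, 1, 0;
       u + u⁻¹, 0, u⁻¹ + (u + u⁻¹) * b] with hN
  -- characteristic polynomial
  have hcp : N.charpoly = (X + C u) * (X + C u⁻¹) * (X + 1) := by
    rw [hN, Matrix.charpoly, Matrix.det_fin_three]
    simp [charmatrix_apply_eq, charmatrix_apply_ne]
    linear_combination (X * C u * C b + X * C u⁻¹ * C b - X ^ 2 * C u * C b -
      X ^ 2 * C u⁻¹ * C b - X ^ 2 - X ^ 2 * C u - X ^ 2 * C u⁻¹ - C u * C u⁻¹) * h2X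
 -- eigenvectors
  have heig : ∀ μ : F, (μ + u) * (μ + u⁻¹) * (μ + 1) = 0 →
      ∃ w : Fin 3 → F, w ≠ 0 ∧ N.mulVec w = μ • w := by
    intro μ hμ
    have hdet : (μ • (1 : Matrix (Fin 3) (Fin 3) F) - N).det = 0 := by
      have hev : (μ • (1 : Matrix (Fin 3) (Fin 3) F) - N).det = Polynomial.eval μ N.charpoly := by
        rw [Matrix.charpoly, ← Polynomial.coe_evalRingHom, RingHom.map_det]
        congr 1
        ext i j
        by_cases h : i = j
        · subst h
          simp [charmatrix_apply_eq, Matrix.one_apply, Matrix.sub_apply]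
        · simp [charmatrix_apply_ne _ _ _ h, Matrix.one_apply_ne h, Matrix.sub_apply, h]
      rw [hev, hcp]
      simpa using hμ
    obtain ⟨w, hw0, hw⟩ := (Matrix.exists_mulVec_eq_zero_iff).mpr hdet
    refine ⟨w, hw0, ?_⟩
    have := hw
    rw [Matrix.sub_mulVec, Matrix.smul_mulVec, Matrix.one_mulVec, sub_eq_zero] at this
    exact this.symm
  have hadd : ∀ x : F, x + x = 0 := fun x => CharTwo.add_self_eq_zero x
  have hroot : ∀ μ ∈ ({u, u⁻¹, 1} : Set F), (μ + u) * (μ + u⁻¹) * (μ + 1) = 0 := by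
    intro μ hμ
    rcases hμ with h | h | h <;> subst h
    · rw [hadd u, zero_mul, zero_mul]
    · rw [hadd u⁻¹, mul_zero, zero_mul]
    · rw [hadd 1, mul_zero]
  refine ⟨hcp, ?_, ?_⟩
  · intro μ hμ
    obtain ⟨w, hw0, hw⟩ := heig μ (hroot μ hμ)
    exact Module.End.hasEigenvalue_of_hasEigenvector
      ⟨Module.End.mem_eigenspace_iff.mpr (by rw [Matrix.toLin'_apply, hw]), hw0⟩
  -- order
  have hu1 : u ^ (q + 1) = 1 := by
    have hpow := pow_orderOf_eq_one a
    rw [ha] at hpow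
    calc u ^ (q + 1) = ((a ^ (q + 1) : Fˣ) : F) := by rw [Units.val_pow_eq_pow_val]
    _ = 1 := by rw [hpow]; rfl
  have hv1 : (u⁻¹) ^ (q + 1) = 1 := by rw [inv_pow, hu1, inv_one]
  -- distinctness
  have hun1 : u ≠ 1 := by
    intro h
    have : a = 1 := Units.val_eq_one.mp (by rw [← hu]; exact h)
    rw [this, orderOf_one] at ha
    omega
  have hvn1 : u⁻¹ ≠ 1 := by
    intro h
    exact hun1 (by rw [← inv_inv u, h, inv_one])
  have hunv : u ≠ u⁻¹ := by
    intro h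
    have hsq : a ^ 2 = 1 := by
      have hval : ((a ^ 2 : Fˣ) : F) = 1 := by
        rw [Units.val_pow_eq_pow_val, ← hu, sq]
        nth_rw 2 [h]
        exact mul_inv_cancel₀ hu0
      exact Units.val_eq_one.mp hval
    have hdv := orderOf_dvd_of_pow_eq_one hsq
    rw [ha] at hdv
    have := Nat.le_of_dvd (by norm_num) hdv
    omega
  -- charpoly divides X^(q+1) - 1
  have hXC : ∀ r : F, (X : F[X]) + C r = X - C r := by
    intro r
    rw [sub_eq_add_neg, CharTwo.neg_eq]
  have hdvd : N.charpoly ∣ (X : F[X]) ^ (q + 1) - 1 := by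
    rw [hcp, hXC u, hXC u⁻¹, C_1.symm, hXC 1]
    have d1 : (X : F[X]) - C u ∣ X ^ (q + 1) - 1 := dvd_iff_isRoot.mpr (by
      simp [IsRoot, hu1])
    have d2 : (X : F[X]) - C u⁻¹ ∣ X ^ (q + 1) - 1 := dvd_iff_isRoot.mpr (by
      simp [IsRoot, hv1])
    have d3 : (X : F[X]) - C 1 ∣ X ^ (q + 1) - 1 := dvd_iff_isRoot.mpr (by
      simp [IsRoot])
    have c12 : IsCoprime ((X : F[X]) - C u) (X - C u⁻¹) :=
      isCoprime_X_sub_C_of_isUnit_sub (sub_ne_zero_of_ne (by exact_mod_cast hunv)).isUnit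
    have c13 : IsCoprime ((X : F[X]) - C u) (X - C 1) :=
      isCoprime_X_sub_C_of_isUnit_sub (sub_ne_zero_of_ne hun1).isUnit
    have c23 : IsCoprime ((X : F[X]) - C u⁻¹) (X - C 1) :=
      isCoprime_X_sub_C_of_isUnit_sub (sub_ne_zero_of_ne hvn1).isUnit
    exact (c13.mul_left c23).mul_dvd (c12.mul_dvd d1 d2) d3
  have hNpow : N ^ (q + 1) = 1 := by
    obtain ⟨r, hr⟩ := hdvd
    have h0 : aeval N ((X : F[X]) ^ (q + 1) - 1) = 0 := by
      rw [hr, _root_.map_mul, Matrix.aeval_self_charpoly, zero_mul]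
    rw [_root_.map_sub, _root_.map_pow, aeval_X, _root_.map_one, sub_eq_zero] at h0
    exact h0
  have hdords : orderOf N ∣ q + 1 := orderOf_dvd_of_pow_eq_one hNpow
  obtain ⟨w, hw0, hw⟩ := heig u (hroot u (by left; rfl))
  have hiter : ∀ k : ℕ, (N ^ k).mulVec w = u ^ k • w := by
    intro k
    induction k with
    | zero => simp
    | succ k ih =>
      rw [pow_succ, pow_succ, ← Matrix.mulVec_mulVec, hw, Matrix.mulVec_smul, ih,
        smul_smul, mul_comm]
  have hud : u ^ orderOf N = 1 := by
    have h1 : (N ^ orderOf N).mulVec w = u ^ orderOf N • w := hiter _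
    rw [pow_orderOf_eq_one, Matrix.one_mulVec] at h1
    obtain ⟨i, hi⟩ := Function.ne_iff.mp hw0
    have h3 : w i = u ^ orderOf N * w i := congrFun h1 i
    have h4 : (u ^ orderOf N - 1) * w i = 0 := by linear_combination -h3
    rcases mul_eq_zero.mp h4 with h | h
    · exact sub_eq_zero.mp h
    · exact absurd h (by simpa using hi)
  have hqd : q + 1 ∣ orderOf N := by
    have haN : a ^ orderOf N = 1 := Units.ext (by
      rw [Units.val_pow_eq_pow_val, ← hu, hud]; rfl)
    have := orderOf_dvd_of_pow_eq_one haN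
    rwa [ha] at this
  exact Nat.dvd_antisymm hdords hqd
end

section
/- Let q = 2^f ≥ 4, b ∈ F_{q²} with b + b^q = 1 and b^{q+1} ≠ 1, and a ∈ F_{q²}^× with a + a⁻¹ ≠ 0. Define X, Y, Z as in Construction 3.2 over F_{q²}. Then the group generated by X, Y, Z stabilizes no subspace of F_{q²}³ of dimension 1 or 2, i.e., it acts irreducibly on F_{q²}³. -/
open Matrix

/-- Lemma 3.4: the group generated by `X`, `Y`, `Z` of Construction 3.2
acts irreducibly on row vectors of `F_{q²}³`. -/
theorem stmt_14 (f q : ℕ) (hq : q = 2 ^ f) (hq4 : 4 ≤ q)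
    (F : Type) [Field F] [Fintype F] (hF : Fintype.card F = q ^ 2)
    (b : F) (hb1 : b + b ^ q = 1) (hb2 : b ^ (q + 1) ≠ 1)
    (a : Fˣ) (ha : (a : F) + (a : F)⁻¹ ≠ 0)
    (W : Submodule F (Fin 3 → F))
    (hX : ∀ v ∈ W, Matrix.vecMul v
      (!![b, 1, 1; b ^ q, 0, 1; b ^ (q + 1), b, b ^ q] : Matrix (Fin 3) (Fin 3) F) ∈ W)
    (hY : ∀ v ∈ W, Matrix.vecMul v
      (!![(a : F) * b + (a : F)⁻¹ * b ^ q, 0,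
            (a : F) * (b + b ^ (q + 1)) + (a : F)⁻¹ * (b ^ q + b ^ (q + 1));
          0, 1, 0;
          (a : F) + (a : F)⁻¹, 0, (a : F) * b + (a : F)⁻¹ * b ^ q] :
         Matrix (Fin 3) (Fin 3) F) ∈ W)
    (hZ : ∀ v ∈ W, Matrix.vecMul v
      (!![1, 0, 1; 0, 1, 0; 0, 0, 1] : Matrix (Fin 3) (Fin 3) F) ∈ W) :
    W = ⊥ ∨ W = ⊤ := by
  have hq0 : q ≠ 0 := by omega
  -- characteristic 2
  have h2 : (2 : F) = 0 := by
    have hc : ((Fintype.card F : ℕ) : F) = 0 := FiniteField.cast_card_eq_zero F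
    rw [hF, hq, ← pow_mul] at hc
    have hc' : ((2 : F)) ^ (f * 2) = 0 := by push_cast at hc; exact hc
    have hf2 : f * 2 ≠ 0 := by
      rcases Nat.eq_zero_or_pos f with h | h
      · subst h; simp at hq; omega
      · omega
    exact pow_eq_zero_iff hf2 |>.mp hc'
  have hbq : b ^ q = 1 - b := eq_sub_of_add_eq' hb1
  have hbne0 : b ≠ 0 := by
    intro h
    rw [h, zero_pow hq0, add_zero] at hb1
    exact zero_ne_one hb1
  have hbne1 : b ≠ 1 := by
    intro h
    rw [h, one_pow, one_add_one_eq_two, h2] at hb1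
    exact zero_ne_one hb1
  have hbqne0 : b ^ q ≠ 0 := by
    rw [hbq, sub_ne_zero]
    exact fun h => hbne1 h.symm
  by_cases hcase : ∀ v ∈ W, v 0 = 0
  · left
    rw [eq_bot_iff]
    intro v hv
    have h0 : v 0 = 0 := hcase v hv
    have hY0 := hcase _ (hY v hv)
    have hX0 := hcase _ (hX v hv)
    simp [Matrix.vecMul, dotProduct, Fin.sum_univ_three, h0] at hY0 hX0
    have hv2 : v 2 = 0 := by
      rcases hY0 with h | h
      · exact h
      · exact absurd h ha
    have hv1 : v 1 = 0 := by
      have h' : v 1 * b ^ q = 0 := by linear_combination hX0 - b ^ (q + 1) * hv2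
      rcases mul_eq_zero.mp h' with h | h
      · exact h
      · exact absurd h hbqne0
    have : v = 0 := by
      funext j; fin_cases j <;> simpa using (by assumption : _)
    simp [this]
  · right
    push_neg at hcase
    obtain ⟨v, hv, hv0⟩ := hcase
    -- (0,0,v0) ∈ W
    have hw : (![0, 0, v 0] : Fin 3 → F) ∈ W := by
      have h1 := W.sub_mem (hZ v hv) hv
      have he : (![0, 0, v 0] : Fin 3 → F) =
          Matrix.vecMul v (!![1, 0, 1; 0, 1, 0; 0, 0, 1] : Matrix (Fin 3) (Fin 3) F) - v := by
        funext j; fin_cases j <;>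
          simp [Matrix.vecMul, dotProduct, Fin.sum_univ_three, Matrix.vecHead, Matrix.vecTail] <;> ring
      rw [he]; exact h1
    have he3 : (![0, 0, 1] : Fin 3 → F) ∈ W := by
      have h1 := W.smul_mem (v 0)⁻¹ hw
      have he : (![0, 0, 1] : Fin 3 → F) = (v 0)⁻¹ • (![0, 0, v 0] : Fin 3 → F) := by
        funext j; fin_cases j <;> simp [inv_mul_cancel₀ hv0]
      rw [he]; exact h1
    have he1 : (![1, 0, 0] : Fin 3 → F) ∈ W := by
      have h1 := W.sub_mem (hY _ he3) (W.smul_mem ((a : F) * b + (a : F)⁻¹ * b ^ q) he3)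
      have he : (![(a : F) + (a : F)⁻¹, 0, 0] : Fin 3 → F) =
          Matrix.vecMul (![0, 0, 1] : Fin 3 → F)
            (!![(a : F) * b + (a : F)⁻¹ * b ^ q, 0,
                (a : F) * (b + b ^ (q + 1)) + (a : F)⁻¹ * (b ^ q + b ^ (q + 1));
                0, 1, 0;
                (a : F) + (a : F)⁻¹, 0, (a : F) * b + (a : F)⁻¹ * b ^ q] :
              Matrix (Fin 3) (Fin 3) F)
            - ((a : F) * b + (a : F)⁻¹ * b ^ q) • (![0, 0, 1] : Fin 3 → F) := by
        funext j; fin_cases j <;>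
          simp [Matrix.vecMul, dotProduct, Fin.sum_univ_three, Matrix.vecHead, Matrix.vecTail] <;> ring
      rw [← he] at h1
      have h2' := W.smul_mem ((a : F) + (a : F)⁻¹)⁻¹ h1
      have he' : (![1, 0, 0] : Fin 3 → F) =
          ((a : F) + (a : F)⁻¹)⁻¹ • (![(a : F) + (a : F)⁻¹, 0, 0] : Fin 3 → F) := by
        funext j; fin_cases j <;> simp [inv_mul_cancel₀ ha]
      rw [he']; exact h2'
    have he2 : (![0, 1, 0] : Fin 3 → F) ∈ W := by
      have h1 := W.sub_mem (W.sub_mem (hX _ he3) (W.smul_mem (b ^ (q + 1)) he1))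
        (W.smul_mem (b ^ q) he3)
      have he : (![0, b, 0] : Fin 3 → F) =
          Matrix.vecMul (![0, 0, 1] : Fin 3 → F)
            (!![b, 1, 1; b ^ q, 0, 1; b ^ (q + 1), b, b ^ q] : Matrix (Fin 3) (Fin 3) F)
            - b ^ (q + 1) • (![1, 0, 0] : Fin 3 → F) - b ^ q • (![0, 0, 1] : Fin 3 → F) := by
        funext j; fin_cases j <;>
          simp [Matrix.vecMul, dotProduct, Fin.sum_univ_three, Matrix.vecHead, Matrix.vecTail] <;> ring
      rw [← he] at h1
      have h2' := W.smul_mem b⁻¹ h1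
      have he' : (![0, 1, 0] : Fin 3 → F) = b⁻¹ • (![0, b, 0] : Fin 3 → F) := by
        funext j; fin_cases j <;> simp [inv_mul_cancel₀ hbne0]
      rw [he']; exact h2'
    rw [eq_top_iff]
    intro u _
    have hu : u = u 0 • (![1, 0, 0] : Fin 3 → F) + u 1 • (![0, 1, 0] : Fin 3 → F)
        + u 2 • (![0, 0, 1] : Fin 3 → F) := by
      funext j; fin_cases j <;> simp
    rw [hu]
    exact W.add_mem (W.add_mem (W.smul_mem _ he1) (W.smul_mem _ he2)) (W.smul_mem _ he3)
end

section
/- Let q₀ ≥ 2 be a power of 2 and r ∈ {5, 7}. Then q₀^r + 1 does not divide q₀³(q₀³+1)(q₀²−1) · gcd((q₀^r+1)/(q₀+1), 3). Moreover, for any odd prime r ≥ 11, 2(q₀^r + 1) > q₀³(q₀³+1)(q₀²−1) · gcd((q₀^r+1)/(q₀+1), 3). -/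
/-- Order-divisibility facts ruling out subfield subgroups `SU₃(q₀).C₃`
containing a dihedral group of order `2(q+1)`, where `q = q₀^r`. -/
theorem stmt_16 (q₀ : ℕ) (h2 : 2 ≤ q₀) (hpow : ∃ f, q₀ = 2 ^ f) :
    (∀ r ∈ ({5, 7} : Set ℕ),
      ¬ (q₀ ^ r + 1 ∣ q₀ ^ 3 * (q₀ ^ 3 + 1) * (q₀ ^ 2 - 1) *
          Nat.gcd ((q₀ ^ r + 1) / (q₀ + 1)) 3)) ∧
    (∀ r : ℕ, Nat.Prime r → Odd r → 11 ≤ r →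
      2 * (q₀ ^ r + 1) >
        q₀ ^ 3 * (q₀ ^ 3 + 1) * (q₀ ^ 2 - 1) * Nat.gcd ((q₀ ^ r + 1) / (q₀ + 1)) 3) := by
  obtain ⟨f, hf⟩ := hpow
  -- basic coprimality : q₀^r + 1 is coprime to q₀^3
  have hcop : ∀ r : ℕ, r ≠ 0 → Nat.Coprime (q₀ ^ r + 1) (q₀ ^ 3) := by
    intro r hr
    have hself : Nat.Coprime q₀ (q₀ + 1) := by simp [Nat.Coprime, Nat.gcd_add_one]
    have hself' : ∀ m : ℕ, Nat.Coprime m (m + 1) := fun m => by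
      simp [Nat.Coprime, Nat.gcd_add_one]
    have h1 : Nat.Coprime q₀ (q₀ ^ r + 1) :=
      Nat.Coprime.coprime_dvd_left (dvd_pow_self q₀ hr) (hself' (q₀ ^ r))
    exact (h1.symm.pow_right 3)
  have hq2 : (4 : ℕ) ≤ q₀ ^ 2 := by nlinarith
  have hq3 : (8 : ℕ) ≤ q₀ ^ 3 := by nlinarith
  have hlt5 : (q₀ ^ 3 + 1) * (q₀ ^ 2 - 1) < q₀ ^ 5 + 1 := by
    have ha : q₀ ^ 2 - 1 + 1 = q₀ ^ 2 := by omega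
    have hb : q₀ ^ 2 - 1 < q₀ ^ 3 + 1 := by nlinarith
    calc (q₀ ^ 3 + 1) * (q₀ ^ 2 - 1) = q₀ ^ 3 * (q₀ ^ 2 - 1) + (q₀ ^ 2 - 1) := by ring
      _ < q₀ ^ 3 * (q₀ ^ 2 - 1) + (q₀ ^ 3 + 1) := by omega
      _ = q₀ ^ 3 * ((q₀ ^ 2 - 1) + 1) + 1 := by ring
      _ = q₀ ^ 5 + 1 := by rw [ha]; ring
  constructor
  · intro r hr
    simp only [Set.mem_insert_iff, Set.mem_singleton_iff] at hr
    obtain rfl | rfl := hr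
    · -- r = 5 : need gcd ((q^5+1)/(q+1)) 3 = 1
      intro hdvd
      set K := (q₀ ^ 5 + 1) / (q₀ + 1) with hKdef
      have hle : q₀ ^ 3 + q₀ ≤ q₀ ^ 4 + q₀ ^ 2 + 1 := by nlinarith
      have hKval : K = q₀ ^ 4 + q₀ ^ 2 + 1 - (q₀ ^ 3 + q₀) := by
        rw [hKdef]
        apply Nat.div_eq_of_eq_mul_left (by omega)
        zify [hle]
        ring
      have h3K : ¬ (3 ∣ K) := by
        intro h
        have h0 : (K : ZMod 3) = 0 := (ZMod.natCast_eq_zero_iff K 3).mpr h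
        rw [hKval] at h0
        rw [Nat.cast_sub hle] at h0
        push_cast at h0
        have hcases : (q₀ : ZMod 3) = 1 ∨ (q₀ : ZMod 3) = 2 := by
          rw [hf]
          push_cast
          have h21 : (2 : ZMod 3) = -1 := by decide
          rcases Nat.even_or_odd f with he | ho
          · left; rw [h21, he.neg_one_pow]
          · right; rw [h21, ho.neg_one_pow]
        rcases hcases with h1 | h1 <;> rw [h1] at h0 <;> revert h0 <;> decide
      have hg : Nat.gcd K 3 = 1 :=
        Nat.coprime_comm.mp ((Nat.Prime.coprime_iff_not_dvd Nat.prime_three).mpr h3K)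
      rw [hg, mul_one] at hdvd
      rw [show q₀ ^ 3 * (q₀ ^ 3 + 1) * (q₀ ^ 2 - 1)
            = q₀ ^ 3 * ((q₀ ^ 3 + 1) * (q₀ ^ 2 - 1)) by ring] at hdvd
      have hdvd2 : q₀ ^ 5 + 1 ∣ (q₀ ^ 3 + 1) * (q₀ ^ 2 - 1) :=
        (hcop 5 (by norm_num)).dvd_of_dvd_mul_left hdvd
      have hpos : 0 < (q₀ ^ 3 + 1) * (q₀ ^ 2 - 1) :=
        Nat.mul_pos (by omega) (by omega)
      have hle2 := Nat.le_of_dvd hpos hdvd2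
      omega
    · -- r = 7 : use gcd ≤ 3 and size
      intro hdvd
      set g := Nat.gcd ((q₀ ^ 7 + 1) / (q₀ + 1)) 3 with hgdef
      have hg3 : g ≤ 3 := Nat.le_of_dvd (by norm_num) (Nat.gcd_dvd_right _ _)
      have hg1 : 1 ≤ g := Nat.gcd_pos_of_pos_right _ (by norm_num)
      rw [show q₀ ^ 3 * (q₀ ^ 3 + 1) * (q₀ ^ 2 - 1) * g
            = q₀ ^ 3 * ((q₀ ^ 3 + 1) * (q₀ ^ 2 - 1) * g) by ring] at hdvd
      have hdvd2 : q₀ ^ 7 + 1 ∣ (q₀ ^ 3 + 1) * (q₀ ^ 2 - 1) * g :=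
        (hcop 7 (by norm_num)).dvd_of_dvd_mul_left hdvd
      have hpos : 0 < (q₀ ^ 3 + 1) * (q₀ ^ 2 - 1) * g :=
        Nat.mul_pos (Nat.mul_pos (by omega) (by omega)) (by omega)
      have hle2 := Nat.le_of_dvd hpos hdvd2
      have h1 : (q₀ ^ 3 + 1) * (q₀ ^ 2 - 1) * g ≤ q₀ ^ 5 * 3 :=
        Nat.mul_le_mul (by omega) hg3
      have h3 : 4 * q₀ ^ 5 ≤ q₀ ^ 7 := by
        calc 4 * q₀ ^ 5 ≤ q₀ ^ 2 * q₀ ^ 5 := Nat.mul_le_mul_right _ hq2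
          _ = q₀ ^ 7 := by ring
      omega
  · -- second part : size estimate for r ≥ 11
    intro r hr hodd hr11
    set g := Nat.gcd ((q₀ ^ r + 1) / (q₀ + 1)) 3 with hgdef
    have hg3 : g ≤ 3 := Nat.le_of_dvd (by norm_num) (Nat.gcd_dvd_right _ _)
    have h1 : q₀ ^ 3 * (q₀ ^ 3 + 1) * (q₀ ^ 2 - 1) * g
        ≤ q₀ ^ 3 * (q₀ ^ 3 + q₀ ^ 3) * q₀ ^ 2 * 3 := by
      apply Nat.mul_le_mul
      apply Nat.mul_le_mul
      apply Nat.mul_le_mul_left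
      · omega
      · omega
      · exact hg3
    have h2 : q₀ ^ 3 * (q₀ ^ 3 + q₀ ^ 3) * q₀ ^ 2 * 3 = 6 * q₀ ^ 8 := by ring
    have h3 : 16 * q₀ ^ 8 ≤ 2 * q₀ ^ 11 := by
      have : 8 * q₀ ^ 8 ≤ q₀ ^ 3 * q₀ ^ 8 := Nat.mul_le_mul_right _ hq3
      calc 16 * q₀ ^ 8 = 2 * (8 * q₀ ^ 8) := by ring
        _ ≤ 2 * (q₀ ^ 3 * q₀ ^ 8) := by omega
        _ = 2 * q₀ ^ 11 := by ring
    have h4 : q₀ ^ 11 ≤ q₀ ^ r := Nat.pow_le_pow_right (by omega) hr11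
    have h5 : 0 < q₀ ^ 8 := by positivity
    omega
end

section
/- Let q = 2^f, b ∈ F_{q²} with b + b^q = 1, and a ∈ F_{q²}^×. With X, Y, Z as in Construction 3.2, the characteristic polynomial of ZX is λ³ + (1+b+b²)λ² + (1+b+b²)λ + 1, and the characteristic polynomial of XY is λ³ + (a(1+b+b³+b⁴) + a⁻¹(b²+b³+b⁴))λ² + (a(1+b+b³+b⁴) + a⁻¹(b²+b³+b⁴))λ + 1 over F_{q²}. -/
open Matrix Polynomial

private lemma cp3 {F : Type} [Field F] (h2 : (2:F) = 0) (M : Matrix (Fin 3) (Fin 3) F)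
    (c : F) (hT : M 0 0 + M 1 1 + M 2 2 = c)
    (hS : M 0 0 * M 1 1 + M 0 0 * M 2 2 + M 1 1 * M 2 2
        - M 0 1 * M 1 0 - M 0 2 * M 2 0 - M 1 2 * M 2 1 = c)
    (hD : M.det = 1) :
    M.charpoly = X ^ 3 + C c * X ^ 2 + C c * X + 1 := by
  subst hT
  have h2X : (2 : F[X]) = 0 := by
    rw [show (2 : F[X]) = C (2 : F) from (map_ofNat C 2).symm, h2, map_zero]
  have hSC := congrArg (C : F →+* F[X]) hS
  have hDC := congrArg (C : F →+* F[X]) hD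
  rw [Matrix.det_fin_three] at hDC
  simp only [map_add, _root_.map_mul, map_sub, _root_.map_one] at hSC hDC
  rw [Matrix.charpoly, Matrix.det_fin_three]
  simp [charmatrix_apply_eq, charmatrix_apply_ne]
  linear_combination (-(C (M 0 0) + C (M 1 1) + C (M 2 2)) * X ^ 2 - 1) * h2X
    + X * hSC - hDC

/-- Characteristic polynomials of `ZX` and `XY` for Construction 3.2. -/
theorem stmt_17 (f q : ℕ) (hq : q = 2 ^ f)
    (F : Type) [Field F] [Fintype F] (hF : Fintype.card F = q ^ 2)
    (b : F) (hb : b + b ^ q = 1) (a : Fˣ) :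
    Matrix.charpoly
        ((!![1, 0, 1; 0, 1, 0; 0, 0, 1] : Matrix (Fin 3) (Fin 3) F) *
          !![b, 1, 1; b ^ q, 0, 1; b ^ (q + 1), b, b ^ q]) =
      X ^ 3 + C (1 + b + b ^ 2) * X ^ 2 + C (1 + b + b ^ 2) * X + 1 ∧
    Matrix.charpoly
        ((!![b, 1, 1; b ^ q, 0, 1; b ^ (q + 1), b, b ^ q] : Matrix (Fin 3) (Fin 3) F) *
          !![(a : F) * b + (a : F)⁻¹ * b ^ q, 0,
              (a : F) * (b + b ^ (q + 1)) + (a : F)⁻¹ * (b ^ q + b ^ (q + 1));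
             0, 1, 0;
             (a : F) + (a : F)⁻¹, 0, (a : F) * b + (a : F)⁻¹ * b ^ q]) =
      X ^ 3 +
        C ((a : F) * (1 + b + b ^ 3 + b ^ 4) + (a : F)⁻¹ * (b ^ 2 + b ^ 3 + b ^ 4)) * X ^ 2 +
        C ((a : F) * (1 + b + b ^ 3 + b ^ 4) + (a : F)⁻¹ * (b ^ 2 + b ^ 3 + b ^ 4)) * X + 1 := by
  -- the characteristic of `F` is 2
  have hp := ringChar.charP F
  obtain ⟨n, hprime, hcard⟩ := FiniteField.card F (ringChar F)
  have hdvd : ringChar F ∣ 2 := by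
    refine hprime.dvd_of_dvd_pow (n := 2 * f) ?_
    have : ringChar F ∣ Fintype.card F := hcard ▸ dvd_pow_self _ n.ne_zero
    rwa [hF, hq, ← pow_mul, mul_comm] at this
  have hchar : ringChar F = 2 :=
    (Nat.prime_dvd_prime_iff_eq hprime Nat.prime_two).mp hdvd
  have h2 : (2 : F) = 0 := by
    have := CharP.cast_eq_zero F (ringChar F)
    rwa [hchar, Nat.cast_ofNat] at this
  have ha : (a : F) * (a : F)⁻¹ = 1 := mul_inv_cancel₀ a.ne_zero
  have hbq : b ^ q = 1 + b := by linear_combination hb - b * h2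
  have hb1 : b ^ (q + 1) = b + b ^ 2 := by rw [pow_succ, hbq]; ring
  rw [hbq, hb1]
  constructor
  · refine cp3 h2 _ _ ?_ ?_ ?_ <;>
      simp [Matrix.mul_apply, Fin.sum_univ_three, Matrix.det_fin_three]
    · linear_combination b * h2
    · linear_combination (-1 - 2*b - b^2) * h2
    · linear_combination -h2
  · refine cp3 h2 _ _ ?_ ?_ ?_ <;>
      simp [Matrix.mul_apply, Fin.sum_univ_three, Matrix.det_fin_three]
    · linear_combination ((a:F)⁻¹ * (1 + 2*b + 2*b^2 + b^3) + (a:F) * (2*b^2 + b^3)) * h2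
    · linear_combination (-(a:F)⁻¹ * (1 + 2*b + 3*b^2 + 2*b^3 + b^4)
        - (a:F) * (1 + b + 2*b^2 + 2*b^3 + b^4)) * h2
    · linear_combination (b + (a:F)^2 * b) * h2 + (1 + 2*b) * ha
end
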